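/- arXiv:0812.3562 — 5 statements merged into one kernel-verified Lean document; each statement's English description precedes it below -/
import Mathlib

section
/- The function k ↦ (1 − k₃² / ‖k‖²) / ‖k‖³ is not integrable on the set {k ∈ ℝ³ : 0 < ‖k‖ ≤ 1} with respect to Lebesgue measure. -/
open MeasureTheory Set
open scoped Pointwise ENNReal

private lemma coord_sq_le (k : EuclideanSpace ℝ (Fin 3)) : (k 2) ^ 2 ≤ ‖k‖ ^ 2 := by
  have h : ‖k‖ ^ 2 = ∑ i, (k i) ^ 2 := by
    rw [EuclideanSpace.norm_eq, Real.sq_sqrt (by positivity)]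
    simp [sq_abs]
  rw [h]
  exact Finset.single_le_sum (f := fun i => (k i) ^ 2) (fun i _ => sq_nonneg _) (Finset.mem_univ 2)

private lemma f_nonneg (k : EuclideanSpace ℝ (Fin 3)) :
    0 ≤ (1 - (k 2) ^ 2 / ‖k‖ ^ 2) / ‖k‖ ^ 3 := by
  rcases eq_or_ne ‖k‖ 0 with h | h
  · simp [h]
  · have hn : (0:ℝ) < ‖k‖ := lt_of_le_of_ne (norm_nonneg k) (Ne.symm h)
    apply div_nonneg _ (by positivity)
    have h1 := coord_sq_le k
    have h2 : (0:ℝ) < ‖k‖ ^ 2 := by positivity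
    rw [sub_nonneg]
    exact (div_le_one h2).2 h1


/-- The function `k ↦ (1 − k₃²/‖k‖²) / ‖k‖³` is not integrable on
`{k ∈ ℝ³ : 0 < ‖k‖ ≤ 1}` with respect to Lebesgue measure (infrared divergence). -/
theorem stmt_4 :
    ¬ IntegrableOn
        (fun k : EuclideanSpace ℝ (Fin 3) => (1 - (k 2) ^ 2 / ‖k‖ ^ 2) / ‖k‖ ^ 3)
        {k : EuclideanSpace ℝ (Fin 3) | 0 < ‖k‖ ∧ ‖k‖ ≤ 1} := by
  set f : EuclideanSpace ℝ (Fin 3) → ℝ :=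
    fun k => (1 - (k 2) ^ 2 / ‖k‖ ^ 2) / ‖k‖ ^ 3 with hf
  set S : Set (EuclideanSpace ℝ (Fin 3)) := {k | 0 < ‖k‖ ∧ ‖k‖ ≤ 1} with hS
  intro hI
  have hnonneg : ∀ k, 0 ≤ f k := f_nonneg
  -- dyadic annuli
  set A : ℕ → Set (EuclideanSpace ℝ (Fin 3)) :=
    fun n => {k | (2:ℝ)⁻¹ ^ (n + 1) < ‖k‖ ∧ ‖k‖ ≤ (2:ℝ)⁻¹ ^ n} with hA
  have hAmeas : ∀ n, MeasurableSet (A n) := fun n =>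
    (measurableSet_lt measurable_const continuous_norm.measurable).inter
      (measurableSet_le continuous_norm.measurable measurable_const)
  have hAsub : ∀ n, A n ⊆ S := by
    intro n k hk
    refine ⟨lt_trans (by positivity) hk.1, le_trans hk.2 ?_⟩
    exact pow_le_one₀ (by norm_num) (by norm_num)
  have hAint : ∀ n, IntegrableOn f (A n) := fun n => hI.mono_set (hAsub n)
  -- disjointness
  have hdisj' : ∀ m n : ℕ, m < n → Disjoint (A m) (A n) := by
    intro m n hmn
    rw [Set.disjoint_left]
    rintro k ⟨hk1, _⟩ ⟨_, hk4⟩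
    have : (2:ℝ)⁻¹ ^ n ≤ (2:ℝ)⁻¹ ^ (m + 1) :=
      pow_le_pow_of_le_one (by norm_num) (by norm_num) hmn
    linarith
  -- scaling: each annulus has the same integral
  have hscale : ∀ n, ∫ k in A n, f k = ∫ k in A 0, f k := by
    intro n
    set c : ℝ := (2:ℝ)⁻¹ ^ n with hc
    have hcpos : (0:ℝ) < c := by positivity
    have hsetEq : A n = c • A 0 := by
      ext x
      rw [mem_smul_set_iff_inv_smul_mem₀ hcpos.ne']
      have hnx : ‖c⁻¹ • x‖ = c⁻¹ * ‖x‖ := by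
        rw [norm_smul, Real.norm_eq_abs, abs_of_pos (inv_pos.2 hcpos)]
      simp only [hA, Set.mem_setOf_eq, hnx, zero_add, pow_one, pow_zero]
      rw [lt_inv_mul_iff₀ hcpos, inv_mul_le_one₀ hcpos,
        show c * 2⁻¹ = (2:ℝ)⁻¹ ^ (n + 1) from by rw [hc, ← pow_succ]]
    have hcomp := Measure.setIntegral_comp_smul volume f (A 0) hcpos.ne'
    have hhomog : ∀ x ∈ A 0, f (c • x) = (c ^ 3)⁻¹ * f x := by
      intro x hx
      have hxn : (0:ℝ) < ‖x‖ := lt_trans (by norm_num) hx.1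
      have h1 : ‖c • x‖ = c * ‖x‖ := by
        rw [norm_smul, Real.norm_eq_abs, abs_of_pos hcpos]
      have h2 : (c • x) 2 = c * x 2 := by simp [PiLp.smul_apply]
      simp only [hf, h1, h2]
      field_simp
    have hLHS : ∫ x in A 0, f (c • x) = (c ^ 3)⁻¹ * ∫ x in A 0, f x := by
      rw [setIntegral_congr_fun (hAmeas 0) hhomog, integral_const_mul]
    rw [hLHS, finrank_euclideanSpace, Fintype.card_fin, ← hsetEq, smul_eq_mul,
      abs_of_pos (inv_pos.2 (by positivity : (0:ℝ) < c ^ 3))] at hcomp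
    exact (mul_left_cancel₀ (inv_ne_zero (by positivity : (c:ℝ) ^ 3 ≠ 0)) hcomp).symm
  -- positivity of the base integral
  have hnonnegae : (0 : EuclideanSpace ℝ (Fin 3) → ℝ) ≤ᵐ[volume.restrict S] f :=
    Filter.Eventually.of_forall hnonneg
  have hpos : 0 < ∫ k in A 0, f k := by
    rw [setIntegral_pos_iff_support_of_nonneg_ae
      (Filter.Eventually.of_forall hnonneg) (hAint 0)]
    set U : Set (EuclideanSpace ℝ (Fin 3)) :=
      {k | (2:ℝ)⁻¹ < ‖k‖} ∩ {k | ‖k‖ < 1} ∩ {k | (k 2) ^ 2 < ‖k‖ ^ 2} with hU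
    have hUopen : IsOpen U := by
      refine ((isOpen_lt continuous_const continuous_norm).inter
        (isOpen_lt continuous_norm continuous_const)).inter ?_
      exact isOpen_lt (by fun_prop) (by fun_prop)
    have hUne : U.Nonempty := by
      refine ⟨EuclideanSpace.single (0 : Fin 3) (3/4 : ℝ), ?_, ?_⟩
      · constructor <;>
        · simp only [Set.mem_setOf_eq, EuclideanSpace.norm_single]
          norm_num
      · have h0 : (EuclideanSpace.single (0 : Fin 3) (3/4 : ℝ)) 2 = 0 := by
          rw [EuclideanSpace.single_apply, if_neg (by decide)]
        simp only [Set.mem_setOf_eq, EuclideanSpace.norm_single, h0]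
        norm_num
    have hUsub : U ⊆ Function.support f ∩ A 0 := by
      rintro k ⟨⟨h1, h2⟩, h3⟩
      have hkn : (0:ℝ) < ‖k‖ := lt_trans (by norm_num) h1
      have hfk : 0 < f k := by
        apply div_pos _ (by positivity)
        rw [sub_pos]
        exact (div_lt_one (by positivity)).2 h3
      refine ⟨fun h => absurd h hfk.ne', ?_⟩
      show (2:ℝ)⁻¹ ^ (0 + 1) < ‖k‖ ∧ ‖k‖ ≤ (2:ℝ)⁻¹ ^ 0
      constructor
      · simpa using h1
      · simpa using h2.le
    calc (0:ℝ≥0∞) < volume U := hUopen.measure_pos volume hUne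
      _ ≤ volume (Function.support f ∩ A 0) := measure_mono hUsub
  -- summing over annuli gives a contradiction
  have hsum : ∀ N : ℕ, (N : ℝ) * ∫ k in A 0, f k ≤ ∫ k in S, f k := by
    intro N
    have h1 : ∫ k in ⋃ n ∈ Finset.range N, A n, f k
        = ∑ n ∈ Finset.range N, ∫ k in A n, f k :=
      integral_biUnion_finset (Finset.range N) (fun n _ => hAmeas n)
        (fun m _ n _ hmn => by
          rcases lt_or_gt_of_ne hmn with h | h
          · exact hdisj' m n h
          · exact (hdisj' n m h).symm)
        (fun n _ => hAint n)
    have h2 : ∑ n ∈ Finset.range N, ∫ k in A n, f k = (N : ℝ) * ∫ k in A 0, f k := by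
      rw [Finset.sum_congr rfl fun n _ => hscale n, Finset.sum_const, Finset.card_range,
        nsmul_eq_mul]
    rw [← h2, ← h1]
    exact setIntegral_mono_set hI hnonnegae
      (HasSubset.Subset.eventuallyLE (Set.iUnion₂_subset fun n _ => hAsub n))
  obtain ⟨N, hN⟩ := exists_nat_gt ((∫ k in S, f k) / ∫ k in A 0, f k)
  have h1 := hsum N
  have h2 := (div_lt_iff₀ hpos).1 hN
  linarith
end

section
/- For every γ ∈ (0,1) and Λ > 0, the function k ↦ 1 / (|k₃|^(1−γ) · ‖k‖²) is integrable on the set {k ∈ ℝ³ : 0 < ‖k‖ ≤ Λ} with respect to Lebesgue measure. -/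
/-!
Since `|kᵢ| ≤ ‖k‖`, splitting `‖k‖²` as `‖k‖^(1-γ/4) ‖k‖^(1-γ/4) ‖k‖^(γ/2)` bounds the
denominator below by `|k₁|^(1-γ/4) |k₂|^(1-γ/4) |k₃|^(1-γ/2)`. Every exponent is `< 1`, so on the
cube `[-Λ, Λ]³` the integrand is dominated by a product of one-variable functions `|x|^(-p)`
with `p < 1`, each integrable near `0`, and such a product is integrable by Fubini.
-/

open MeasureTheory Set

lemma locallyIntegrable_abs_rpow_neg {p : ℝ} (hp : p < 1) :
    LocallyIntegrable fun x : ℝ => |x| ^ (-p) :=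
  locallyIntegrable_of_norm_le_rpow (C := 1) (α := p) (by simp) (by simpa using hp)
    (ae_of_all _ fun x => by simp [abs_nonneg, Real.abs_rpow_of_nonneg])
    (Measurable.aestronglyMeasurable (by fun_prop))

lemma integrableOn_univ_pi_prod {ι : Type*} [Fintype ι] {f : ι → ℝ → ℝ} {s : ι → Set ℝ}
    (hf : ∀ i, IntegrableOn (f i) (s i)) :
    IntegrableOn (fun x : ι → ℝ => ∏ i, f i (x i)) (univ.pi s) := by
  rw [IntegrableOn, volume_pi, Measure.restrict_pi_pi]
  exact Integrable.fintype_prod hf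

namespace EuclideanSpace

variable {ι : Type*} [Fintype ι]

lemma integrableOn_prod_apply {f : ι → ℝ → ℝ} {s : ι → Set ℝ}
    (hf : ∀ i, IntegrableOn (f i) (s i)) :
    IntegrableOn (fun k : EuclideanSpace ℝ ι => ∏ i, f i (k i)) {k | ∀ i, k i ∈ s i} := by
  have h := (PiLp.volume_preserving_ofLp ι).integrableOn_comp_preimage
    (MeasurableEquiv.toLp 2 (ι → ℝ)).symm.measurableEmbedding |>.2 (integrableOn_univ_pi_prod hf)
  simp only [preimage, mem_univ_pi] at h
  exact h

lemma ae_apply_ne_zero (i : ι) : ∀ᵐ k : EuclideanSpace ℝ ι, k i ≠ 0 := by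
  classical
  have hker :
      LinearMap.ker ((proj i : EuclideanSpace ℝ ι →L[ℝ] ℝ) : EuclideanSpace ℝ ι →ₗ[ℝ] ℝ) ≠ ⊤ := by
    intro h
    have := LinearMap.congr_fun (LinearMap.ker_eq_top.1 h) (single i 1)
    simp at this
  rw [ae_iff]
  convert Measure.addHaar_submodule volume _ hker
  ext k
  simp

lemma prod_abs_rpow_le_norm_rpow_sum (k : EuclideanSpace ℝ ι) {q : ι → ℝ} (hq : ∀ i, 0 ≤ q i) :
    ∏ i, |k i| ^ q i ≤ ‖k‖ ^ ∑ i, q i := by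
  rw [Real.rpow_sum_of_nonneg (norm_nonneg k) fun i _ => hq i]
  gcongr with i
  · exact hq i
  · simpa using PiLp.norm_apply_le k i

end EuclideanSpace

lemma prod_abs_rpow_le_abs_rpow_mul_norm_sq {γ : ℝ} (hγ0 : 0 ≤ γ) (hγ2 : γ < 2)
    (k : EuclideanSpace ℝ (Fin 3)) :
    ∏ i, |k i| ^ (![1 - γ / 4, 1 - γ / 4, 1 - γ / 2] i) ≤ |k 2| ^ (1 - γ) * ‖k‖ ^ 2 := by
  have hsplit : |k 2| ^ (1 - γ / 2) = |k 2| ^ (1 - γ) * |k 2| ^ (γ / 2) := by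
    rw [← Real.rpow_add' (abs_nonneg _) (by linarith)]
    ring_nf
  have hq := EuclideanSpace.prod_abs_rpow_le_norm_rpow_sum k
    (q := ![1 - γ / 4, 1 - γ / 4, γ / 2]) (by intro i; fin_cases i <;> simp <;> linarith)
  simp only [Fin.prod_univ_three, Fin.sum_univ_three, Matrix.cons_val_zero, Matrix.cons_val_one,
    Matrix.cons_val_two, Matrix.head_cons, Matrix.tail_cons] at hq ⊢
  rw [show 1 - γ / 4 + (1 - γ / 4) + γ / 2 = (2 : ℕ) by ring, Real.rpow_natCast] at hq
  rw [hsplit]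
  calc _ = |k 2| ^ (1 - γ) * (|k 0| ^ (1 - γ / 4) * |k 1| ^ (1 - γ / 4) * |k 2| ^ (γ / 2)) := by
        ring
    _ ≤ _ := by gcongr

theorem stmt_5_general (γ Λ : ℝ) (hγ0 : 0 < γ) (hγ1 : γ < 1) :
    IntegrableOn
      (fun k : EuclideanSpace ℝ (Fin 3) => 1 / (|k 2| ^ (1 - γ) * ‖k‖ ^ 2))
      {k : EuclideanSpace ℝ (Fin 3) | 0 < ‖k‖ ∧ ‖k‖ ≤ Λ} := by
  set p : Fin 3 → ℝ := ![1 - γ / 4, 1 - γ / 4, 1 - γ / 2]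
  have hp : ∀ i, p i < 1 := by intro i; fin_cases i <;> simp [p] <;> linarith
  have hdom : IntegrableOn (fun k : EuclideanSpace ℝ (Fin 3) => ∏ i, |k i| ^ (-p i))
      {k | ∀ i, k i ∈ Icc (-Λ) Λ} :=
    EuclideanSpace.integrableOn_prod_apply fun i =>
      (locallyIntegrable_abs_rpow_neg (hp i)).integrableOn_isCompact isCompact_Icc
  refine (hdom.mono_set fun k hk i => abs_le.1 ((PiLp.norm_apply_le k i).trans hk.2)).mono'
    (Measurable.aestronglyMeasurable (by fun_prop)) ?_
  filter_upwards [ae_restrict_of_ae (ae_all_iff.2 EuclideanSpace.ae_apply_ne_zero)] with k hk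
  have hpos : 0 < ∏ i, |k i| ^ p i :=
    Finset.prod_pos fun i _ => Real.rpow_pos_of_pos (abs_pos.2 (hk i)) _
  rw [Real.norm_of_nonneg (by positivity)]
  calc _ ≤ 1 / ∏ i, |k i| ^ p i := one_div_le_one_div_of_le hpos
        (prod_abs_rpow_le_abs_rpow_mul_norm_sq hγ0.le (by linarith) k)
    _ = ∏ i, |k i| ^ (-p i) := by
        simp only [Real.rpow_neg (abs_nonneg _), Finset.prod_inv_distrib, one_div]

/-- For every `γ ∈ (0,1)` and `Λ > 0`, the function `k ↦ 1 / (|k₃|^(1−γ) · ‖k‖²)` is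
integrable on `{k ∈ ℝ³ : 0 < ‖k‖ ≤ Λ}` with respect to Lebesgue measure. -/
theorem stmt_5 (γ Λ : ℝ) (hγ0 : 0 < γ) (hγ1 : γ < 1) (hΛ : 0 < Λ) :
    IntegrableOn
      (fun k : EuclideanSpace ℝ (Fin 3) => 1 / (|k 2| ^ (1 - γ) * ‖k‖ ^ 2))
      {k : EuclideanSpace ℝ (Fin 3) | 0 < ‖k‖ ∧ ‖k‖ ≤ Λ} :=
  stmt_5_general γ Λ hγ0 hγ1
end

section
/- Let H be a complex Hilbert space, let A and B be continuous linear operators on H, let u ∈ H be a unit vector, and let e₀ ∈ ℝ, γ > 0, ρ > 0, a ∈ [0,1). Assume: (i) re⟪ψ, A ψ⟫ ≥ e₀·‖ψ‖² for all ψ ∈ H; (ii) re⟪ψ, A ψ⟫ ≥ (e₀ + γ)·‖ψ‖² for all ψ with ⟪u, ψ⟫ = 0; and (iii) |re⟪ψ, B ψ⟫| ≤ a·(re⟪ψ, A ψ⟫ − e₀·‖ψ‖² + ρ·‖ψ‖²) for all ψ ∈ H. Then for every ψ with ⟪u, ψ⟫ = 0, re⟪ψ, (A + B) ψ⟫ ≥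 (e₀ + (1−a)·γ − a·ρ)·‖ψ‖². -/
open scoped InnerProductSpace

/-- Quadratic-form gap estimate: if `A` has bottom `e₀` and gap `γ` on the orthogonal
complement of the unit vector `u`, and `B` is relatively form-bounded with bound `a < 1`
(up to `ρ`), then `A + B` is bounded below by `e₀ + (1−a)·γ − a·ρ` on `u^⊥`. -/
theorem stmt_6 {H : Type*} [NormedAddCommGroup H] [InnerProductSpace ℂ H] [CompleteSpace H]
    (A B : H →L[ℂ] H) (u : H) (hu : ‖u‖ = 1) (e₀ γ ρ a : ℝ)
    (hγ : 0 < γ) (hρ : 0 < ρ) (ha0 : 0 ≤ a) (ha1 : a < 1)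
    (hA_bot : ∀ ψ : H, e₀ * ‖ψ‖ ^ 2 ≤ (⟪ψ, A ψ⟫_ℂ).re)
    (hA_gap : ∀ ψ : H, ⟪u, ψ⟫_ℂ = 0 → (e₀ + γ) * ‖ψ‖ ^ 2 ≤ (⟪ψ, A ψ⟫_ℂ).re)
    (hB : ∀ ψ : H, |(⟪ψ, B ψ⟫_ℂ).re| ≤
      a * ((⟪ψ, A ψ⟫_ℂ).re - e₀ * ‖ψ‖ ^ 2 + ρ * ‖ψ‖ ^ 2)) :
    ∀ ψ : H, ⟪u, ψ⟫_ℂ = 0 →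
      (e₀ + (1 - a) * γ - a * ρ) * ‖ψ‖ ^ 2 ≤ (⟪ψ, (A + B) ψ⟫_ℂ).re := by
  intro ψ hψ
  have hsum : (⟪ψ, (A + B) ψ⟫_ℂ).re = (⟪ψ, A ψ⟫_ℂ).re + (⟪ψ, B ψ⟫_ℂ).re := by
    simp [inner_add_right]
  have h1 := hA_gap ψ hψ
  have h2 := (abs_le.mp (hB ψ)).1
  have h3 : (0:ℝ) ≤ ‖ψ‖ ^ 2 := by positivity
  rw [hsum]
  nlinarith [mul_le_mul_of_nonneg_left h1 ha0]
end

section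
/- Let H be a complex Hilbert space, let A and B be continuous linear operators on H, let E ∈ ℝ, ρ > 0, a ∈ [0,1). Assume: (i) re⟪ψ, A ψ⟫ ≥ E for all unit vectors ψ; (ii) for every ε > 0 there exists a unit vector ψ with re⟪ψ, A ψ⟫ < E + ε; and (iii) |re⟪ψ, B ψ⟫| ≤ a·(re⟪ψ, A ψ⟫ − E + ρ) for all unit vectors ψ. Then re⟪ψ, (A + B) ψ⟫ ≥ E − a·ρ for all unit vectors ψ, and for every ε > 0 there exists a unit vector ψ with re⟪ψ, (A + B) ψ⟫ < E + a·ρ + ε. -/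
open scoped InnerProductSpace

/-- Variational comparison of ground-state energies: if `E` is the infimum of the
quadratic form of `A` over unit vectors and `B` is relatively form-bounded with bound
`a < 1` (up to `ρ`), then the bottom of the form of `A + B` lies within `a·ρ` of `E`. -/
theorem stmt_7 {H : Type*} [NormedAddCommGroup H] [InnerProductSpace ℂ H] [CompleteSpace H]
    (A B : H →L[ℂ] H) (E ρ a : ℝ) (hρ : 0 < ρ) (ha0 : 0 ≤ a) (ha1 : a < 1)
    (hA_low : ∀ ψ : H, ‖ψ‖ = 1 → E ≤ (⟪ψ, A ψ⟫_ℂ).re)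
    (hA_inf : ∀ ε : ℝ, 0 < ε → ∃ ψ : H, ‖ψ‖ = 1 ∧ (⟪ψ, A ψ⟫_ℂ).re < E + ε)
    (hB : ∀ ψ : H, ‖ψ‖ = 1 → |(⟪ψ, B ψ⟫_ℂ).re| ≤ a * ((⟪ψ, A ψ⟫_ℂ).re - E + ρ)) :
    (∀ ψ : H, ‖ψ‖ = 1 → E - a * ρ ≤ (⟪ψ, (A + B) ψ⟫_ℂ).re) ∧
      (∀ ε : ℝ, 0 < ε → ∃ ψ : H, ‖ψ‖ = 1 ∧ (⟪ψ, (A + B) ψ⟫_ℂ).re < E + a * ρ + ε) := by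
  have key : ∀ ψ : H, ‖ψ‖ = 1 →
      (⟪ψ, (A + B) ψ⟫_ℂ).re = (⟪ψ, A ψ⟫_ℂ).re + (⟪ψ, B ψ⟫_ℂ).re := by
    intro ψ _
    simp [ContinuousLinearMap.add_apply, inner_add_right]
  constructor
  · intro ψ hψ
    have h1 := hA_low ψ hψ
    have h2 := (abs_le.mp (hB ψ hψ)).1
    rw [key ψ hψ]
    nlinarith
  · intro ε hε
    obtain ⟨ψ, hψ, hlt⟩ := hA_inf (ε/2) (by linarith)
    refine ⟨ψ, hψ, ?_⟩
    have h2 := (abs_le.mp (hB ψ hψ)).2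
    rw [key ψ hψ]
    nlinarith
end

section
/- Let Λ ∈ (0, 1], γ ∈ (0, 1), C ≥ 0, and let E : ℝ → ℝ be differentiable with |E'(x)| ≤ 3/4 for all x and |E'(x) − E'(y)| ≤ C·|x − y|^γ for all x, y. Fix P ∈ ℝ and define, for k ∈ ℝ³ with k₃ ≠ 0, D(k) = E(P − k₃) − E(P) and g(k) = D(k) / (k₃ · ‖k‖^{1/2} · (D(k) + ‖k‖)) (note D(k) + ‖k‖ ≥ ‖k‖/4 > 0 for k ≠ 0, so g is well defined; set g(k) = 0 when k₃ = 0). Then the function k ↦ (1 − k₃²/‖k‖²) · g(k)² is integrable on {k ∈ ℝ³ : 0 < ‖k‖ ≤ Λ} with respect to Lebesgue measure if and only if E'(P) = 0. -/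
/-!
Write `a = E'(P)`. The mean value theorem and the Hölder bound on `E'` give `|D(k)| ≤ ¾|k₃|` and
`D(k) = -a k₃ + O(|k₃|^{1+γ})`; in particular `D(k) + ‖k‖` is comparable to `‖k‖`.
If `a = 0` the integrand is `O(‖k‖^{2γ-3})`, which is integrable near the origin of `ℝ³`.
If `a ≠ 0`, near the origin the integrand dominates a multiple of `(1 - k₃²/‖k‖²)/‖k‖³`.
Averaging this over the coordinate permutations, which preserve Lebesgue measure, gives
`2/(3‖k‖³)`, which is not integrable near the origin.
-/

open MeasureTheory Metric Filter Topology

theorem abs_sub_sub_deriv_mul_le_of_holder {E : ℝ → ℝ} (hE : Differentiable ℝ E) {C γ : ℝ}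
    (hC : 0 ≤ C) (hγ : 0 ≤ γ) (hHol : ∀ x y, |deriv E x - deriv E y| ≤ C * |x - y| ^ γ)
    (x y : ℝ) : |E y - E x - deriv E x * (y - x)| ≤ C * |y - x| ^ γ * |y - x| := by
  have hφ : ∀ t, HasDerivAt (fun t => E t - deriv E x * t) (deriv E t - deriv E x) t := fun t => by
    have := (hE t).hasDerivAt.sub ((hasDerivAt_id' t).const_mul (deriv E x))
    rwa [mul_one] at this
  have hbound : ∀ t ∈ Set.uIcc x y, ‖deriv (fun t => E t - deriv E x * t) t‖ ≤ C * |y - x| ^ γ :=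
    fun t ht => by
      rw [(hφ t).deriv, Real.norm_eq_abs]
      exact (hHol t x).trans <| mul_le_mul_of_nonneg_left
        (Real.rpow_le_rpow (abs_nonneg _) (Set.abs_sub_left_of_mem_uIcc ht) hγ) hC
  have := Convex.norm_image_sub_le_of_norm_deriv_le (fun t _ => (hφ t).differentiableAt) hbound
    (convex_uIcc x y) Set.left_mem_uIcc Set.right_mem_uIcc
  simp only [Real.norm_eq_abs] at this
  convert this using 2
  ring

theorem not_integrableOn_ball_inv_norm_pow_finrank {E : Type*} [NormedAddCommGroup E]
    [NormedSpace ℝ E] [MeasurableSpace E] [BorelSpace E] [FiniteDimensional ℝ E] [Nontrivial E]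
    (μ : Measure E) [μ.IsAddHaarMeasure] {r : ℝ} (hr : 0 < r) :
    ¬ IntegrableOn (fun x : E => (‖x‖ ^ Module.finrank ℝ E)⁻¹) (ball 0 r) μ := by
  have hd : 0 < Module.finrank ℝ E := Module.finrank_pos
  rw [integrableOn_fun_norm_addHaar μ (f := fun y => (y ^ Module.finrank ℝ E)⁻¹),
    integrableOn_congr_fun (g := fun y : ℝ => y ^ (-1 : ℝ)) ?_ measurableSet_Ioo,
    intervalIntegral.integrableOn_Ioo_rpow_iff hr]
  · norm_num
  · intro y hy
    have hy : 0 < y := hy.1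
    dsimp only
    obtain ⟨m, hm⟩ := Nat.exists_eq_add_one_of_ne_zero hd.ne'
    rw [smul_eq_mul, Real.rpow_neg_one, hm, Nat.add_sub_cancel, pow_succ, mul_inv, ← mul_assoc,
      mul_inv_cancel₀ (by positivity), one_mul]

lemma EuclideanSpace.abs_apply_le_norm {ι : Type*} [Fintype ι] (k : EuclideanSpace ℝ ι) (i : ι) :
    |k i| ≤ ‖k‖ :=
  PiLp.norm_apply_le k i

theorem EuclideanSpace.volume_coord_eq_zero {ι : Type*} [Fintype ι] (i : ι) :
    volume {k : EuclideanSpace ℝ ι | k i = 0} = 0 := by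
  classical
  set π : EuclideanSpace ℝ ι →ₗ[ℝ] ℝ := (EuclideanSpace.proj (𝕜 := ℝ) i).toLinearMap
  refine Measure.addHaar_submodule volume (LinearMap.ker π) fun h => ?_
  have : EuclideanSpace.single i (1 : ℝ) ∈ LinearMap.ker π := h ▸ Submodule.mem_top
  simp [π] at this

theorem EuclideanSpace.integrableOn_ball_comp_swap {ι : Type*} [Fintype ι] [DecidableEq ι]
    {f : EuclideanSpace ℝ ι → ℝ} {r : ℝ} (hf : IntegrableOn f (ball 0 r)) (i j : ι) :
    IntegrableOn (fun k => f (LinearIsometryEquiv.piLpCongrLeft 2 ℝ ℝ (Equiv.swap i j) k))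
      (ball 0 r) := by
  set L := LinearIsometryEquiv.piLpCongrLeft 2 ℝ ℝ (Equiv.swap i j)
  have := (L.measurePreserving.integrableOn_comp_preimage L.toHomeomorph.measurableEmbedding).2 hf
  rwa [L.preimage_ball, map_zero] at this

theorem EuclideanSpace.not_integrableOn_ball_one_sub_sq_div_norm_sq_div_norm_pow {ι : Type*}
    [Fintype ι] (hι : 2 ≤ Fintype.card ι) (i : ι) {r : ℝ} (hr : 0 < r) :
    ¬ IntegrableOn (fun k : EuclideanSpace ℝ ι => (1 - k i ^ 2 / ‖k‖ ^ 2) / ‖k‖ ^ Fintype.card ι)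
      (ball 0 r) := by
  classical
  intro hint
  have : Nontrivial (EuclideanSpace ℝ ι) := by
    have : Nonempty ι := Fintype.card_pos_iff.1 (by omega)
    infer_instance
  have hsum := integrable_finsetSum Finset.univ fun j _ =>
    EuclideanSpace.integrableOn_ball_comp_swap hint i j
  apply not_integrableOn_ball_inv_norm_pow_finrank (E := EuclideanSpace ℝ ι) volume hr
  rw [finrank_euclideanSpace]
  -- summed over the swaps `i ↔ j`, the angular factors `1 - k j ^ 2 / ‖k‖ ^ 2` add up to
  -- `card ι - 1`
  refine (integrable_const_mul_iff (c := (Fintype.card ι - 1 : ℝ)) ?_ _).1 ?_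
  · have : (2 : ℝ) ≤ Fintype.card ι := by exact_mod_cast hι
    exact isUnit_iff_ne_zero.2 (by linarith)
  · refine hsum.congr (.of_forall fun k => ?_)
    simp only [LinearIsometryEquiv.norm_map, LinearIsometryEquiv.piLpCongrLeft_apply,
      Equiv.piCongrLeft'_apply, Equiv.symm_swap, Equiv.swap_apply_left]
    rw [← Finset.sum_div, Finset.sum_sub_distrib, ← Finset.sum_div,
      ← EuclideanSpace.real_norm_sq_eq, Finset.sum_const, Finset.card_univ, nsmul_eq_mul, mul_one,
      div_eq_mul_inv]
    rcases eq_or_ne ‖k‖ 0 with hk | hk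
    · simp [hk, show Fintype.card ι ≠ 0 by omega]
    · rw [div_self (pow_ne_zero 2 hk)]

/-- The paper's `g(k)` is `photonAmplitude (D k) k₃ ‖k‖`, also at `k₃ = 0`, where division by zero
gives the convention `g = 0`. -/
noncomputable def photonAmplitude (d s n : ℝ) : ℝ := d / (s * n ^ (1 / 2 : ℝ) * (d + n))

lemma photonAmplitude_sq (d s : ℝ) {n : ℝ} (hn : 0 ≤ n) :
    photonAmplitude d s n ^ 2 = d ^ 2 / (s ^ 2 * n * (d + n) ^ 2) := by
  rw [photonAmplitude, ← Real.sqrt_eq_rpow, div_pow, mul_pow, mul_pow, Real.sq_sqrt hn]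

lemma sq_div_sq_le_one {s n : ℝ} (hsn : |s| ≤ n) : s ^ 2 / n ^ 2 ≤ 1 :=
  div_le_one_of_le₀ (sq_le_sq' (abs_le.1 hsn).1 (abs_le.1 hsn).2) (sq_nonneg n)

lemma photonAmplitude_sq_le {d s n ε : ℝ} (hn : 0 < n) (hsn : |s| ≤ n)
    (hd : |d| ≤ 3 / 4 * |s|) (hε : |d| ≤ ε * |s|) :
    photonAmplitude d s n ^ 2 ≤ 16 * ε ^ 2 / n ^ 3 := by
  rw [photonAmplitude_sq d s hn.le]
  rcases eq_or_ne s 0 with rfl | hs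
  · rw [zero_pow two_ne_zero, zero_mul, zero_mul, div_zero]
    positivity
  have hdn : n / 4 ≤ d + n := by linarith [neg_abs_le d]
  have hd2 : d ^ 2 ≤ (ε * |s|) ^ 2 := by rw [← sq_abs d]; gcongr
  calc d ^ 2 / (s ^ 2 * n * (d + n) ^ 2) ≤ (ε * |s|) ^ 2 / (s ^ 2 * n * (n / 4) ^ 2) := by
        gcongr
    _ = 16 * ε ^ 2 / n ^ 3 := by rw [mul_pow, sq_abs]; field_simp; ring

lemma le_photonAmplitude_sq {d s n a : ℝ} (hn : 0 < n) (hs : s ≠ 0) (hsn : |s| ≤ n)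
    (hd : |d| ≤ 3 / 4 * |s|) (ha : |a| * |s| ≤ 2 * |d|) :
    4 * a ^ 2 / (49 * n ^ 3) ≤ photonAmplitude d s n ^ 2 := by
  rw [photonAmplitude_sq d s hn.le]
  have hdn₁ : n / 4 ≤ d + n := by linarith [neg_abs_le d]
  have hdn₂ : d + n ≤ 7 / 4 * n := by linarith [le_abs_self d]
  have hd2 : (|a| * |s|) ^ 2 ≤ (2 * |d|) ^ 2 := by gcongr
  rw [mul_pow, mul_pow, sq_abs, sq_abs, sq_abs] at hd2
  calc 4 * a ^ 2 / (49 * n ^ 3) = a ^ 2 * s ^ 2 / 4 / (s ^ 2 * n * (7 / 4 * n) ^ 2) := by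
        field_simp; ring
    _ ≤ d ^ 2 / (s ^ 2 * n * (d + n) ^ 2) := by
        have : 0 < d + n := by linarith
        gcongr
        linarith

noncomputable def photonDensity (D : EuclideanSpace ℝ (Fin 3) → ℝ)
    (k : EuclideanSpace ℝ (Fin 3)) : ℝ :=
  (1 - k 2 ^ 2 / ‖k‖ ^ 2) * photonAmplitude (D k) (k 2) ‖k‖ ^ 2

lemma measurable_photonDensity {D : EuclideanSpace ℝ (Fin 3) → ℝ} (hD : Measurable D) :
    Measurable (photonDensity D) := by
  unfold photonDensity photonAmplitude
  fun_prop

section photonDensity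

variable {D : EuclideanSpace ℝ (Fin 3) → ℝ} {γ C : ℝ}

theorem integrableOn_photonDensity (hDm : Measurable D) (hγ : 0 < γ)
    (hLip : ∀ k, |D k| ≤ 3 / 4 * |k 2|) (hD : ∀ k, |D k| ≤ C * |k 2| ^ γ * |k 2|) (r : ℝ) :
    IntegrableOn (photonDensity D) (ball 0 r) := by
  refine integrableOn_ball_of_norm_le_rpow (C := 16 * C ^ 2) (α := 3 - 2 * γ) (by simp)
    (by simp; linarith) (.of_forall fun k => ?_) (measurable_photonDensity hDm).aestronglyMeasurable
  have hsn := EuclideanSpace.abs_apply_le_norm k 2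
  rcases (norm_nonneg k).eq_or_lt with hk | hk
  · simp [norm_eq_zero.1 hk.symm, photonDensity, photonAmplitude]
    positivity
  have hamp := photonAmplitude_sq_le hk hsn (hLip k) (hD k)
  rw [Real.norm_eq_abs, photonDensity,
    abs_of_nonneg (mul_nonneg (sub_nonneg.2 (sq_div_sq_le_one hsn)) (sq_nonneg _))]
  calc (1 - k 2 ^ 2 / ‖k‖ ^ 2) * photonAmplitude (D k) (k 2) ‖k‖ ^ 2
      ≤ 1 * (16 * (C * |k 2| ^ γ) ^ 2 / ‖k‖ ^ 3) :=
        mul_le_mul (by linarith [div_nonneg (sq_nonneg (k 2)) (sq_nonneg ‖k‖)]) hamp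
          (sq_nonneg _) zero_le_one
    _ = 16 * C ^ 2 * (|k 2| ^ γ) ^ 2 / ‖k‖ ^ 3 := by ring
    _ ≤ 16 * C ^ 2 * (‖k‖ ^ γ) ^ 2 / ‖k‖ ^ 3 := by gcongr
    _ = 16 * C ^ 2 * ‖k‖ ^ (-(3 - 2 * γ)) := by
        rw [neg_sub, Real.rpow_sub hk, ← Real.rpow_natCast _ 3, ← Real.rpow_mul_natCast hk.le,
          mul_comm γ, mul_div_assoc]
        norm_num

theorem not_integrableOn_photonDensity {a : ℝ} (ha : a ≠ 0) (hγ : 0 < γ)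
    (hLip : ∀ k, |D k| ≤ 3 / 4 * |k 2|) (hD : ∀ k, |D k + a * k 2| ≤ C * |k 2| ^ γ * |k 2|)
    {r : ℝ} (hr : 0 < r) : ¬ IntegrableOn (photonDensity D) (ball 0 r) := by
  obtain ⟨δ, hδ, hsmall⟩ : ∃ δ > 0, ∀ s : ℝ, dist s 0 < δ → C * |s| ^ γ < |a| / 2 := by
    have hcont : Tendsto (fun s : ℝ => C * |s| ^ γ) (𝓝 0) (𝓝 0) := by
      simpa [Real.zero_rpow hγ.ne'] using
        ((continuous_abs.rpow_const fun _ => Or.inr hγ.le).const_mul C).tendsto 0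
    exact Metric.eventually_nhds_iff.1 (hcont.eventually (gt_mem_nhds (by positivity)))
  set ρ := min r δ
  have hlow : ∀ᵐ k ∂volume.restrict (ball (0 : EuclideanSpace ℝ (Fin 3)) ρ),
      4 * a ^ 2 / 49 * ((1 - k 2 ^ 2 / ‖k‖ ^ 2) / ‖k‖ ^ 3) ≤ photonDensity D k := by
    filter_upwards [ae_restrict_mem measurableSet_ball, ae_restrict_of_ae
      (measure_eq_zero_iff_ae_notMem.1 (EuclideanSpace.volume_coord_eq_zero 2))] with k hk hk2
    have hs : k 2 ≠ 0 := hk2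
    have hsn := EuclideanSpace.abs_apply_le_norm k 2
    have hn : 0 < ‖k‖ := (abs_pos.2 hs).trans_le hsn
    have hsδ : dist (k 2) 0 < δ := by
      rw [Real.dist_0_eq_abs]
      exact hsn.trans_lt ((mem_ball_zero_iff.1 hk).trans_le (min_le_right _ _))
    have ha2 : |a| * |k 2| ≤ 2 * |D k| := by
      have hlin := (hD k).trans (mul_le_mul_of_nonneg_right (hsmall _ hsδ).le (abs_nonneg _))
      have := abs_sub_abs_le_abs_sub (a * k 2) (-D k)
      rw [abs_mul, abs_neg, sub_neg_eq_add, add_comm] at this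
      linarith
    calc 4 * a ^ 2 / 49 * ((1 - k 2 ^ 2 / ‖k‖ ^ 2) / ‖k‖ ^ 3)
        = (1 - k 2 ^ 2 / ‖k‖ ^ 2) * (4 * a ^ 2 / (49 * ‖k‖ ^ 3)) := by ring
      _ ≤ photonDensity D k := mul_le_mul_of_nonneg_left
          (le_photonAmplitude_sq hn hs hsn (hLip k) ha2) (sub_nonneg.2 (sq_div_sq_le_one hsn))
  intro hint
  have hangular := EuclideanSpace.not_integrableOn_ball_one_sub_sq_div_norm_sq_div_norm_pow
    (ι := Fin 3) (by simp) 2 (lt_min hr hδ)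
  rw [Fintype.card_fin] at hangular
  refine hangular ((integrable_const_mul_iff
    (isUnit_iff_ne_zero.2 (by positivity : 4 * a ^ 2 / 49 ≠ 0)) _).1 ?_)
  refine Integrable.mono' (hint.mono_set (ball_subset_ball (min_le_left _ _)))
    (Measurable.aestronglyMeasurable (by fun_prop)) ?_
  filter_upwards [hlow] with k hk
  rwa [Real.norm_of_nonneg (mul_nonneg (by positivity) (div_nonneg
    (sub_nonneg.2 (sq_div_sq_le_one (EuclideanSpace.abs_apply_le_norm k 2))) (by positivity)))]

end photonDensity

theorem stmt_10_general (Λ γ C : ℝ) (hΛ0 : 0 < Λ) (hγ0 : 0 < γ)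
    (hC : 0 ≤ C) (E : ℝ → ℝ) (hE : Differentiable ℝ E)
    (hE' : ∀ x : ℝ, |deriv E x| ≤ 3 / 4)
    (hHol : ∀ x y : ℝ, |deriv E x - deriv E y| ≤ C * |x - y| ^ γ)
    (P : ℝ) (D g : EuclideanSpace ℝ (Fin 3) → ℝ)
    (hD : ∀ k : EuclideanSpace ℝ (Fin 3), D k = E (P - k 2) - E P)
    (hg : ∀ k : EuclideanSpace ℝ (Fin 3),
      g k = if k 2 = 0 then 0
        else D k / (k 2 * ‖k‖ ^ ((1 : ℝ) / 2) * (D k + ‖k‖))) :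
    (IntegrableOn
        (fun k : EuclideanSpace ℝ (Fin 3) => (1 - (k 2) ^ 2 / ‖k‖ ^ 2) * (g k) ^ 2)
        {k : EuclideanSpace ℝ (Fin 3) | 0 < ‖k‖ ∧ ‖k‖ ≤ Λ}) ↔ deriv E P = 0 := by
  have hf : (fun k => (1 - (k 2) ^ 2 / ‖k‖ ^ 2) * (g k) ^ 2) = photonDensity D := by
    funext k
    rw [hg k, photonDensity, photonAmplitude]
    split_ifs with hk <;> simp [hk]
  have hLip : ∀ k, |D k| ≤ 3 / 4 * |k 2| := fun k => by
    simpa [hD k] using Convex.norm_image_sub_le_of_norm_deriv_le (fun x _ => hE x)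
      (fun x _ => hE' x) convex_univ (Set.mem_univ P) (Set.mem_univ (P - k 2))
  have hTaylor : ∀ k, |D k + deriv E P * k 2| ≤ C * |k 2| ^ γ * |k 2| := fun k => by
    simpa [hD k, sub_eq_add_neg] using
      abs_sub_sub_deriv_mul_le_of_holder hE hC hγ0.le hHol P (P - k 2)
  rw [hf]
  constructor
  · intro hint
    by_contra ha
    refine not_integrableOn_photonDensity ha hγ0 hLip hTaylor hΛ0 (hint.mono_set_ae ?_)
    refine ae_le_set.2 (measure_mono_null (fun k ⟨hkΛ, hkS⟩ => ?_) (measure_singleton 0))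
    by_contra h0
    exact hkS ⟨norm_pos_iff.2 h0, (mem_ball_zero_iff.1 hkΛ).le⟩
  · intro ha
    have hDm : Measurable D := by
      have := hE.continuous
      rw [funext hD]
      fun_prop
    refine (integrableOn_photonDensity hDm hγ0 hLip (by simpa [ha] using hTaylor) (Λ + 1)).mono_set
      fun k hk => mem_ball_zero_iff.2 (by linarith [hk.2])

/-- Dichotomy for square-integrability of the expected photon wave function: with
`D(k) = E(P − k₃) − E(P)` and `g(k) = D(k) / (k₃·‖k‖^{1/2}·(D(k) + ‖k‖))` (set to `0`
when `k₃ = 0`), the function `k ↦ (1 − k₃²/‖k‖²)·g(k)²` is integrable on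
`{0 < ‖k‖ ≤ Λ}` if and only if `E'(P) = 0`. -/
theorem stmt_10 (Λ γ C : ℝ) (hΛ0 : 0 < Λ) (hΛ1 : Λ ≤ 1) (hγ0 : 0 < γ) (hγ1 : γ < 1)
    (hC : 0 ≤ C) (E : ℝ → ℝ) (hE : Differentiable ℝ E)
    (hE' : ∀ x : ℝ, |deriv E x| ≤ 3 / 4)
    (hHol : ∀ x y : ℝ, |deriv E x - deriv E y| ≤ C * |x - y| ^ γ)
    (P : ℝ) (D g : EuclideanSpace ℝ (Fin 3) → ℝ)
    (hD : ∀ k : EuclideanSpace ℝ (Fin 3), D k = E (P - k 2) - E P)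
    (hg : ∀ k : EuclideanSpace ℝ (Fin 3),
      g k = if k 2 = 0 then 0
        else D k / (k 2 * ‖k‖ ^ ((1 : ℝ) / 2) * (D k + ‖k‖))) :
    (IntegrableOn
        (fun k : EuclideanSpace ℝ (Fin 3) => (1 - (k 2) ^ 2 / ‖k‖ ^ 2) * (g k) ^ 2)
        {k : EuclideanSpace ℝ (Fin 3) | 0 < ‖k‖ ∧ ‖k‖ ≤ Λ}) ↔ deriv E P = 0 :=
  stmt_10_general Λ γ C hΛ0 hγ0 hC E hE hE' hHol P D g hD hg
end
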